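/- arXiv:math/0009037 — 4 statements merged into one kernel-verified Lean document; each statement's English description precedes it below -/
import Mathlib

section
/- Let p ≥ 1 be an integer. Then the sequence C(n,p) = exp( (1/p)·∑_{j=1}^n 1/j ) · ∏_{j=1}^n (j·p/(j·p+1)) converges as n → ∞ to the positive limit exp( ∑_{m=2}^∞ ((−1)^m / (m·p^m)) · ζ(m) ), where ζ(m) = ∑_{k=1}^∞ k^{−m} is the Riemann zeta function. -/
/-!
With `x_k = 1/(k p) ∈ (0, 1]` and `g x = x - log (1 + x)`, the logarithm of `C(n,p)` is
`∑_{k ≤ n} g x_k`. Expanding `ζ(m)`, the `M`-th partial sum of the series over `m` becomes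
`∑_k ∑_{m=2}^M (-1)^m x_k^m / m`. For `0 ≤ x ≤ 1` the alternating partial sums
`∑_{m=2}^M (-1)^m x^m / m` tend to `g x` and stay in `[0, x^2/2]`; since `∑_k x_k^2 < ∞`,
dominated convergence over `k` shows that both sides tend to `S = ∑_k g x_k`.
-/

open Filter Topology Finset Real

/-- The Riemann zeta value `ζ(m) = ∑_{k=1}^∞ k^{−m}` as a real number. -/
noncomputable def zetaR (m : ℕ) : ℝ := ∑' k : ℕ+, ((k : ℝ) ^ m)⁻¹

namespace Real

theorem tendsto_sum_range_neg_one_pow_div_succ :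
    Tendsto (fun n ↦ ∑ i ∈ range n, (-1 : ℝ) ^ i / (i + 1)) atTop (𝓝 (log 2)) := by
  obtain ⟨l, h⟩ : ∃ l, Tendsto (fun n ↦ ∑ i ∈ range n, (-1 : ℝ) ^ i / (i + 1)) atTop (𝓝 l) := by
    simp_rw [div_eq_mul_inv]
    apply Antitone.tendsto_alternating_series_of_tendsto_zero
    · exact antitone_iff_forall_lt.mpr fun _ _ _ ↦ by gcongr
    · exact tendsto_inv_atTop_zero.comp
        (tendsto_atTop_add_const_right _ 1 tendsto_natCast_atTop_atTop)
  -- The series converges only conditionally; Abel's theorem identifies its sum with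
  -- the limit of `log (1 + x) / x` as `x → 1⁻`.
  have abel := tendsto_tsum_powerSeries_nhdsWithin_lt h
  have hcont : Tendsto (fun x : ℝ ↦ log (1 + x) / x) (𝓝[<] 1) (𝓝 (log 2)) := by
    refine tendsto_nhdsWithin_of_tendsto_nhds ?_
    have : ContinuousAt (fun x : ℝ ↦ log (1 + x) / x) 1 := by
      fun_prop (disch := norm_num)
    simpa [one_add_one_eq_two] using this.tendsto
  suffices (fun x ↦ ∑' n : ℕ, (-1 : ℝ) ^ n / (n + 1) * x ^ n) =ᶠ[𝓝[<] 1]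
      fun x ↦ log (1 + x) / x by
    rwa [tendsto_nhds_unique (abel.congr' this) hcont] at h
  filter_upwards [Ioo_mem_nhdsLT (show (0 : ℝ) < 1 by norm_num)] with x hx
  have hs := hasSum_pow_div_log_of_abs_lt_one (x := -x)
    (by rw [abs_lt]; constructor <;> linarith [hx.1, hx.2])
  rw [sub_neg_eq_add] at hs
  rw [eq_div_iff hx.1.ne', ← tsum_mul_right, ← neg_neg (log (1 + x)), ← hs.tsum_eq, ← tsum_neg]
  refine tsum_congr fun n ↦ ?_
  rw [pow_succ, neg_pow]
  ring

theorem tendsto_sum_range_log_one_add {x : ℝ} (h₁ : -1 < x) (h₂ : x ≤ 1) :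
    Tendsto (fun n ↦ ∑ i ∈ range n, (-1 : ℝ) ^ i * x ^ (i + 1) / (i + 1)) atTop
      (𝓝 (log (1 + x))) := by
  rcases h₂.lt_or_eq with hx | rfl
  · have hs := hasSum_pow_div_log_of_abs_lt_one (x := -x)
      (by rw [abs_lt]; constructor <;> linarith)
    rw [sub_neg_eq_add] at hs
    convert hs.neg.tendsto_sum_nat using 2 with n
    · refine sum_congr rfl fun i _ ↦ ?_
      rw [neg_pow, pow_succ]
      ring
    · rw [neg_neg]
  · simpa [one_add_one_eq_two, div_eq_mul_inv] using tendsto_sum_range_neg_one_pow_div_succ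

theorem tendsto_sum_range_sub_log_one_add {x : ℝ} (h₁ : -1 < x) (h₂ : x ≤ 1) :
    Tendsto (fun n ↦ ∑ i ∈ range n, (-1 : ℝ) ^ i * x ^ (i + 2) / (i + 2)) atTop
      (𝓝 (x - log (1 + x))) := by
  refine ((tendsto_sum_range_log_one_add h₁ h₂).comp (tendsto_add_atTop_nat 1)).const_sub x
    |>.congr fun n ↦ ?_
  have hterm (i : ℕ) : (-1 : ℝ) ^ (i + 1) * x ^ (i + 1 + 1) / ((i + 1 : ℕ) + 1) =
      -((-1) ^ i * x ^ (i + 2) / (i + 2)) := by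
    push_cast; ring
  simp only [Function.comp_apply, sum_range_succ', hterm, sum_neg_distrib]
  ring

end Real

theorem sum_range_neg_one_pow_mul_mem_Icc {R : Type*} [Ring R] [PartialOrder R]
    [IsOrderedRing R] {a : ℕ → R} (ha : Antitone a) (h0 : ∀ i, 0 ≤ a i) (n : ℕ) :
    ∑ i ∈ range n, (-1) ^ i * a i ∈ Set.Icc 0 (a 0) := by
  induction n generalizing a with
  | zero => simpa using h0 0
  | succ n ih =>
    obtain ⟨hl, hu⟩ := ih (a := fun i ↦ a (i + 1)) (fun i j hij ↦ ha (by omega))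
      (fun i ↦ h0 (i + 1))
    rw [sum_range_succ']
    simp only [pow_succ, mul_neg_one, neg_mul, sum_neg_distrib, pow_zero, one_mul]
    rw [neg_add_eq_sub, Set.mem_Icc, sub_nonneg, sub_le_self_iff]
    exact ⟨hu.trans (ha (Nat.zero_le 1)), hl⟩

theorem sum_Icc_two_neg_one_pow_eq_sum_range (x : ℝ) (M : ℕ) :
    ∑ m ∈ Icc 2 M, (-1 : ℝ) ^ m * x ^ m / m =
      ∑ i ∈ range (M - 1), (-1 : ℝ) ^ i * x ^ (i + 2) / (i + 2) := by
  rw [← Ico_add_one_right_eq_Icc, sum_Ico_eq_sum_range, show M + 1 - 2 = M - 1 by omega]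
  refine sum_congr rfl fun i _ ↦ ?_
  push_cast
  ring

theorem tendsto_sum_Icc_two_neg_one_pow {x : ℝ} (h₁ : -1 < x) (h₂ : x ≤ 1) :
    Tendsto (fun M : ℕ ↦ ∑ m ∈ Icc 2 M, (-1 : ℝ) ^ m * x ^ m / m) atTop
      (𝓝 (x - log (1 + x))) := by
  simpa only [sum_Icc_two_neg_one_pow_eq_sum_range, Function.comp_def] using
    (tendsto_sum_range_sub_log_one_add h₁ h₂).comp (tendsto_sub_atTop_nat 1)

theorem sum_Icc_two_neg_one_pow_mem_Icc {x : ℝ} (h₀ : 0 ≤ x) (h₁ : x ≤ 1) (M : ℕ) :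
    ∑ m ∈ Icc 2 M, (-1 : ℝ) ^ m * x ^ m / m ∈ Set.Icc 0 (x ^ 2 / 2) := by
  rw [sum_Icc_two_neg_one_pow_eq_sum_range]
  have hanti : Antitone fun i : ℕ ↦ x ^ (i + 2) / (i + 2) := antitone_nat_of_succ_le fun i ↦
    div_le_div₀ (by positivity) (pow_le_pow_of_le_one h₀ h₁ (by omega)) (by positivity)
      (by push_cast; linarith)
  simpa [mul_div_assoc] using
    sum_range_neg_one_pow_mul_mem_Icc hanti (fun i ↦ by positivity) (M - 1)

theorem sub_log_one_add_mem_Icc {x : ℝ} (h₀ : 0 ≤ x) (h₁ : x ≤ 1) :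
    x - log (1 + x) ∈ Set.Icc 0 (x ^ 2 / 2) :=
  isClosed_Icc.mem_of_tendsto (tendsto_sum_Icc_two_neg_one_pow (by linarith) h₁)
    (Eventually.of_forall (sum_Icc_two_neg_one_pow_mem_Icc h₀ h₁))

theorem summable_pnat_inv_pow {m : ℕ} (hm : 2 ≤ m) : Summable fun k : ℕ+ ↦ ((k : ℝ) ^ m)⁻¹ :=
  summable_pnat_iff_summable_nat.mpr (Real.summable_nat_pow_inv.mpr hm)

theorem sum_Icc_mul_zetaR_eq_tsum (p : ℝ) (M : ℕ) :
    ∑ m ∈ Icc 2 M, ((-1 : ℝ) ^ m / (m * p ^ m)) * zetaR m =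
      ∑' k : ℕ+, ∑ m ∈ Icc 2 M, (-1 : ℝ) ^ m * ((k : ℝ) * p)⁻¹ ^ m / m := by
  simp_rw [zetaR, ← tsum_mul_left]
  rw [← Summable.tsum_finsetSum fun m hm ↦
    (summable_pnat_inv_pow (mem_Icc.mp hm).1).mul_left ((-1 : ℝ) ^ m / (m * p ^ m))]
  refine tsum_congr fun k ↦ sum_congr rfl fun m _ ↦ ?_
  rw [mul_inv, mul_pow, inv_pow, inv_pow]
  ring

theorem Summable.tendsto_sum_Icc_one_tsum_pnat {G : Type*} [AddCommMonoid G]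
    [TopologicalSpace G] {f : ℕ → G} (hf : Summable fun k : ℕ+ ↦ f k) :
    Tendsto (fun n ↦ ∑ j ∈ Icc 1 n, f j) atTop (𝓝 (∑' k : ℕ+, f k)) := by
  have := (hasSum_pnat_iff_hasSum_succ.mp hf.hasSum).tendsto_sum_nat
  refine this.congr fun n ↦ ?_
  rw [← Ico_add_one_right_eq_Icc, sum_Ico_eq_sum_range, Nat.add_sub_cancel]
  exact sum_congr rfl fun i _ ↦ by rw [add_comm]

theorem exp_mul_prod_eq_exp_sum_sub_log {p : ℝ} (hp : 0 < p) (n : ℕ) :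
    exp ((1 / p) * ∑ j ∈ Icc 1 n, (1 : ℝ) / j) * ∏ j ∈ Icc 1 n, ((j : ℝ) * p / (j * p + 1)) =
      exp (∑ j ∈ Icc 1 n, (((j : ℝ) * p)⁻¹ - log (1 + ((j : ℝ) * p)⁻¹))) := by
  rw [mul_sum, exp_sum, exp_sum, ← prod_mul_distrib]
  refine prod_congr rfl fun j hj ↦ ?_
  have hj0 : (0 : ℝ) < j := by exact_mod_cast (mem_Icc.mp hj).1
  rw [exp_sub, exp_log (by positivity)]
  field_simp

/-- The normalizing sequence `C(n,p) = exp((1/p)·∑_{j=1}^n 1/j) · ∏_{j=1}^n (j·p/(j·p+1))`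
converges as `n → ∞` to the positive limit `exp(∑_{m=2}^∞ ((−1)^m/(m·p^m))·ζ(m))`,
where the series over `m` is understood as the limit of its partial sums. -/
theorem stmt5 (p : ℕ) (hp : 1 ≤ p) :
    ∃ S : ℝ,
      Tendsto (fun M : ℕ =>
          ∑ m ∈ Finset.Icc 2 M, ((-1 : ℝ) ^ m / ((m : ℝ) * (p : ℝ) ^ m)) * zetaR m)
        atTop (𝓝 S) ∧
      Tendsto (fun n : ℕ =>
          Real.exp ((1 / (p : ℝ)) * ∑ j ∈ Finset.Icc 1 n, (1 : ℝ) / (j : ℝ)) *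
            ∏ j ∈ Finset.Icc 1 n, ((j : ℝ) * (p : ℝ) / ((j : ℝ) * (p : ℝ) + 1)))
        atTop (𝓝 (Real.exp S)) ∧
      0 < Real.exp S := by
  set x : ℕ → ℝ := fun k ↦ ((k : ℝ) * p)⁻¹ with hx
  have hx_mem (k : ℕ+) : x k ∈ Set.Icc 0 1 := by
    have : (1 : ℝ) ≤ k * p := one_le_mul_of_one_le_of_one_le (mod_cast k.pos) (mod_cast hp)
    exact ⟨by positivity, inv_le_one_of_one_le₀ this⟩
  have hbound : Summable fun k : ℕ+ ↦ x k ^ 2 / 2 := by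
    refine ((summable_pnat_inv_pow le_rfl).mul_left ((p : ℝ) ^ 2)⁻¹).div_const 2
      |>.congr fun k ↦ ?_
    simp only [hx, mul_inv, mul_pow, inv_pow, mul_comm]
  have hg (k : ℕ+) := sub_log_one_add_mem_Icc (hx_mem k).1 (hx_mem k).2
  have hsummable : Summable fun k : ℕ+ ↦ x k - log (1 + x k) :=
    hbound.of_nonneg_of_le (fun k ↦ (hg k).1) (fun k ↦ (hg k).2)
  refine ⟨∑' k : ℕ+, (x k - log (1 + x k)), ?_, ?_, exp_pos _⟩
  · simp_rw [sum_Icc_mul_zetaR_eq_tsum]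
    refine tendsto_tsum_of_dominated_convergence hbound
      (fun k ↦ tendsto_sum_Icc_two_neg_one_pow (by linarith [(hx_mem k).1]) (hx_mem k).2)
      (Eventually.of_forall fun M k ↦ ?_)
    obtain ⟨h₀, h₁⟩ := sum_Icc_two_neg_one_pow_mem_Icc (hx_mem k).1 (hx_mem k).2 M
    rwa [norm_of_nonneg h₀]
  · simp_rw [exp_mul_prod_eq_exp_sum_sub_log (p := (p : ℝ)) (mod_cast hp)]
    exact (continuous_exp.tendsto _).comp hsummable.tendsto_sum_Icc_one_tsum_pnat
end

section
/- Let N = [α, β] be a compact interval with α < β, let k₀ ∈ N, and let r : N → ℝ be continuous with 0 ≤ r(k) ≤ 1 for all k, r(k₀) = 1, and r(k) < 1 for every k ≠ k₀. Then for every continuous function f : N → ℂ, the quotient ( ∫_N r(k)^n f(k) dk ) / ( ∫_N r(k)^n dk ) converges to f(k₀) as n → ∞ (the denominator being strictly positive for every n). -/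
open MeasureTheory Filter Topology

theorem stmt7_general (α β : ℝ) (hαβ : α < β) (k₀ : ℝ) (hk₀ : k₀ ∈ Set.Icc α β)
    (r : ℝ → ℝ) (hr : ContinuousOn r (Set.Icc α β))
    (hr0 : ∀ k ∈ Set.Icc α β, 0 ≤ r k)
    (hmax : r k₀ = 1) (hlt : ∀ k ∈ Set.Icc α β, k ≠ k₀ → r k < 1)
    (f : ℝ → ℂ) (hf : ContinuousOn f (Set.Icc α β)) :
    (∀ n : ℕ, 0 < ∫ k in α..β, r k ^ n) ∧
    Tendsto (fun n : ℕ =>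
        (∫ k in α..β, ((r k : ℂ)) ^ n * f k) / (((∫ k in α..β, r k ^ n : ℝ)) : ℂ))
      atTop (𝓝 (f k₀)) := by
  have hpos : ∀ n : ℕ, 0 < ∫ k in α..β, r k ^ n := fun n =>
    intervalIntegral.integral_pos hαβ (hr.pow n)
      (fun k hk => pow_nonneg (hr0 k (Set.Ioc_subset_Icc_self hk)) n) ⟨k₀, hk₀, by simp [hmax]⟩
  have hk₀_closure : k₀ ∈ closure (interior (Set.Icc α β)) := by
    rwa [interior_Icc, closure_Ioo hαβ.ne]
  have hpeak := tendsto_setIntegral_pow_smul_of_unique_maximum_of_isCompact_of_continuousOn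
    (μ := volume) isCompact_Icc hr (by simpa [hmax] using hlt) hr0 (by simp [hmax]) hk₀_closure hf
  refine ⟨hpos, hpeak.congr fun n => ?_⟩
  simp only [intervalIntegral.integral_of_le hαβ.le, ← integral_Icc_eq_integral_Ioc,
    Complex.real_smul, Complex.ofReal_inv, Complex.ofReal_pow, div_eq_inv_mul]

/-- Concentration of normalized powers: if `r` is continuous on `[α,β]` with `0 ≤ r ≤ 1`,
`r(k₀) = 1` and `r(k) < 1` for `k ≠ k₀`, then for every continuous `f : [α,β] → ℂ`,
`(∫_α^β r(k)^n f(k) dk) / (∫_α^β r(k)^n dk) → f(k₀)` as `n → ∞`, the denominator being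
strictly positive for every `n`. -/
theorem stmt7 (α β : ℝ) (hαβ : α < β) (k₀ : ℝ) (hk₀ : k₀ ∈ Set.Icc α β)
    (r : ℝ → ℝ) (hr : ContinuousOn r (Set.Icc α β))
    (hr0 : ∀ k ∈ Set.Icc α β, 0 ≤ r k) (hr1 : ∀ k ∈ Set.Icc α β, r k ≤ 1)
    (hmax : r k₀ = 1) (hlt : ∀ k ∈ Set.Icc α β, k ≠ k₀ → r k < 1)
    (f : ℝ → ℂ) (hf : ContinuousOn f (Set.Icc α β)) :
    (∀ n : ℕ, 0 < ∫ k in α..β, r k ^ n) ∧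
    Tendsto (fun n : ℕ =>
        (∫ k in α..β, ((r k : ℂ)) ^ n * f k) / (((∫ k in α..β, r k ^ n : ℝ)) : ℂ))
      atTop (𝓝 (f k₀)) :=
  stmt7_general α β hαβ k₀ hk₀ r hr hr0 hmax hlt f hf
end

section
/- Let H be a complex Hilbert space and let A : H → H be a compact, self-adjoint, positive-semidefinite bounded linear operator with ‖A‖ > 0. Let μ = ‖A‖, let P be the orthogonal projection onto the eigenspace ker(A − μ·I), and let U, Ψ ∈ H satisfy ⟨P U, Ψ⟩ ≠ 0. Then ⟨AⁿU, Ψ⟩ ≠ 0 for all sufficiently large n, and the normalized iterates AⁿU / ⟨AⁿU, Ψ⟩ converge in norm to P U / ⟨P U, Ψ⟩ as n → ∞. -/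
/-!
Write `U = V + W` with `V` in the top eigenspace `E = ker (A - ‖A‖)` and `W ∈ Eᗮ`. Since `A` is
self-adjoint, `Eᗮ` is `A`-invariant, and the restriction `B` of `A` to `Eᗮ` has norm `ν < ‖A‖`:
otherwise the spectral radius of the self-adjoint operator `B` is `‖A‖`, so `B` has a spectral
value of modulus `‖A‖`; as `B` is compact this is an eigenvalue, positivity makes it equal to
`‖A‖`, and its eigenvector lies in `E ∩ Eᗮ = 0`. Hence `‖A‖⁻ⁿ AⁿU = V + O((ν / ‖A‖)ⁿ) → V`, and
normalizing by `⟨·, Ψ⟩` does not see the positive real factor `‖A‖ⁿ`.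
-/

open Filter Topology Module.End

theorem LinearMap.IsPositive.eq_norm_of_hasEigenvalue {𝕜 E : Type*} [RCLike 𝕜]
    [NormedAddCommGroup E] [InnerProductSpace 𝕜 E] {T : E →ₗ[𝕜] E} (hT : T.IsPositive) {k : 𝕜}
    (hk : HasEigenvalue T k) : k = ‖k‖ := by
  have hreal : k = (RCLike.re k : 𝕜) :=
    (RCLike.conj_eq_iff_re.mp (hT.isSymmetric.conj_eigenvalue_eq_self hk)).symm
  have hnonneg : 0 ≤ RCLike.re k :=
    eigenvalue_nonneg_of_nonneg (hreal ▸ hk) hT.re_inner_nonneg_right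
  rw [hreal, RCLike.norm_ofReal, abs_of_nonneg hnonneg]

theorem tendsto_inv_inner_smul_of_eq_ofReal_smul {𝕜 E : Type*} [RCLike 𝕜] [NormedAddCommGroup E]
    [InnerProductSpace 𝕜 E] {x y : ℕ → E} {c : ℕ → ℝ} {v ψ : E}
    (hc : ∀ n, c n ≠ 0) (hy : ∀ n, y n = (c n : 𝕜) • x n) (hx : Tendsto x atTop (𝓝 v))
    (hv : inner 𝕜 v ψ ≠ 0) :
    (∀ᶠ n in atTop, inner 𝕜 (y n) ψ ≠ 0) ∧
      Tendsto (fun n => (inner 𝕜 (y n) ψ)⁻¹ • y n) atTop (𝓝 ((inner 𝕜 v ψ)⁻¹ • v)) := by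
  have hinner : Tendsto (fun n => inner 𝕜 (x n) ψ) atTop (𝓝 (inner 𝕜 v ψ)) :=
    hx.inner tendsto_const_nhds
  have hc' (n : ℕ) : (c n : 𝕜) ≠ 0 := RCLike.ofReal_ne_zero.mpr (hc n)
  have hy_inner (n : ℕ) : inner 𝕜 (y n) ψ = c n * inner 𝕜 (x n) ψ := by
    rw [hy, inner_smul_left, RCLike.conj_ofReal]
  refine ⟨?_, ((hinner.inv₀ hv).smul hx).congr fun n => ?_⟩
  · filter_upwards [hinner.eventually_ne hv] with n hn
    rw [hy_inner]
    exact mul_ne_zero (hc' n) hn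
  · rw [hy_inner, hy, smul_smul, mul_inv_rev, mul_assoc, inv_mul_cancel₀ (hc' n), mul_one]

namespace ContinuousLinearMap

section PowerIteration

variable {𝕜 E : Type*} [NontriviallyNormedField 𝕜] [NormedAddCommGroup E] [NormedSpace 𝕜 E]

theorem norm_pow_apply_le (A : E →L[𝕜] E) (x : E) (n : ℕ) : ‖(A ^ n) x‖ ≤ ‖A‖ ^ n * ‖x‖ := by
  induction n with
  | zero => simp
  | succ n ih =>
    calc ‖(A ^ (n + 1)) x‖ = ‖A ((A ^ n) x)‖ := by rw [pow_succ', mul_apply_eq_comp]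
      _ ≤ ‖A‖ * (‖A‖ ^ n * ‖x‖) := A.le_opNorm_of_le ih
      _ = ‖A‖ ^ (n + 1) * ‖x‖ := by ring

theorem coe_restrict_pow_apply (A : E →L[𝕜] E) {F : Submodule 𝕜 E} (hF : ∀ x ∈ F, A x ∈ F)
    (x : F) (n : ℕ) : ((A.restrict hF ^ n) x : E) = (A ^ n) x := by
  induction n with
  | zero => rfl
  | succ n ih =>
    rw [pow_succ', mul_apply_eq_comp, coe_restrict_apply, ih, pow_succ', mul_apply_eq_comp]

theorem norm_pow_apply_le_of_mem (A : E →L[𝕜] E) {F : Submodule 𝕜 E} (hF : ∀ x ∈ F, A x ∈ F)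
    {x : E} (hx : x ∈ F) (n : ℕ) : ‖(A ^ n) x‖ ≤ ‖A.restrict hF‖ ^ n * ‖x‖ :=
  coe_restrict_pow_apply A hF ⟨x, hx⟩ n ▸ norm_pow_apply_le (A.restrict hF) ⟨x, hx⟩ n

theorem pow_apply_of_mem_eigenspace {A : E →L[𝕜] E} {μ : 𝕜} {v : E}
    (hv : v ∈ eigenspace (A : E →ₗ[𝕜] E) μ) (n : ℕ) : (A ^ n) v = μ ^ n • v := by
  induction n with
  | zero => simp
  | succ n ih =>
    rw [pow_succ', mul_apply_eq_comp, ih, map_smul, show A v = μ • v from mem_eigenspace_iff.mp hv,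
      smul_smul, ← pow_succ]

theorem tendsto_inv_pow_smul_pow_apply {A : E →L[𝕜] E} {F : Submodule 𝕜 E}
    (hF : ∀ x ∈ F, A x ∈ F) {μ : 𝕜} (hμ : ‖A.restrict hF‖ < ‖μ‖) {u v : E}
    (hv : v ∈ eigenspace (A : E →ₗ[𝕜] E) μ) (huv : u - v ∈ F) :
    Tendsto (fun n => (μ ^ n)⁻¹ • (A ^ n) u) atTop (𝓝 v) := by
  set ν := ‖A.restrict hF‖
  have hμ0 : μ ≠ 0 := norm_pos_iff.mp ((norm_nonneg _).trans_lt hμ)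
  have hbound (n : ℕ) : ‖(μ ^ n)⁻¹ • (A ^ n) u - v‖ ≤ (ν / ‖μ‖) ^ n * ‖u - v‖ :=
    calc ‖(μ ^ n)⁻¹ • (A ^ n) u - v‖ = ‖μ‖⁻¹ ^ n * ‖(A ^ n) (u - v)‖ := by
          have hsplit : (μ ^ n)⁻¹ • (A ^ n) u - v = (μ ^ n)⁻¹ • (A ^ n) (u - v) := by
            rw [map_sub, pow_apply_of_mem_eigenspace hv, smul_sub,
              inv_smul_smul₀ (pow_ne_zero n hμ0)]
          rw [hsplit, norm_smul, norm_inv, norm_pow, inv_pow]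
      _ ≤ ‖μ‖⁻¹ ^ n * (ν ^ n * ‖u - v‖) := by gcongr; exact norm_pow_apply_le_of_mem A hF huv n
      _ = (ν / ‖μ‖) ^ n * ‖u - v‖ := by ring
  have hratio : ν / ‖μ‖ < 1 := (div_lt_one ((norm_nonneg _).trans_lt hμ)).mpr hμ
  refine tendsto_iff_norm_sub_tendsto_zero.mpr (squeeze_zero (fun _ => norm_nonneg _) hbound ?_)
  simpa using (tendsto_pow_atTop_nhds_zero_of_lt_one (by positivity) hratio).mul_const ‖u - v‖

end PowerIteration

theorem IsPositive.norm_restrict_orthogonal_eigenspace_lt {H : Type*} [NormedAddCommGroup H]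
    [InnerProductSpace ℂ H] [CompleteSpace H] {A : H →L[ℂ] H} (hA : A.IsPositive)
    (hcp : IsCompactOperator A) (hA0 : A ≠ 0) :
    ‖A.restrict (hA.isSymmetric.invariant_orthogonalComplement_eigenspace (‖A‖ : ℂ))‖ < ‖A‖ := by
  set E := eigenspace (A : H →ₗ[ℂ] H) (‖A‖ : ℂ)
  have hF := hA.isSymmetric.invariant_orthogonalComplement_eigenspace (‖A‖ : ℂ)
  set B := A.restrict hF
  have hBA : ‖B‖ ≤ ‖A‖ := B.opNorm_le_bound (norm_nonneg _) fun x => A.le_opNorm x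
  refine hBA.lt_of_ne fun hBA => ?_
  have hA_pos : 0 < ‖A‖ := norm_pos_iff.mpr hA0
  have : Nontrivial (Eᗮ →L[ℂ] Eᗮ) :=
    nontrivial_of_ne B 0 fun h => hA_pos.ne (by rw [← hBA, h]; exact opNorm_zero.symm)
  obtain ⟨k, hkσ, hk⟩ :=
    spectrum.exists_nnnorm_eq_spectralRadius_of_nonempty (spectrum.nonempty B)
  rw [B.spectralRadius_eq_nnnorm (hA.isSymmetric.restrict_invariant hF).isSelfAdjoint] at hk
  have hk_norm : ‖k‖ = ‖A‖ := (congrArg NNReal.toReal (ENNReal.coe_inj.mp hk)).trans hBA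
  have hkB : HasEigenvalue (B : Module.End ℂ Eᗮ) k :=
    ((hcp.restrict' hF).hasEigenvalue_iff_mem_spectrum (norm_pos_iff.mp (hk_norm ▸ hA_pos))).mpr hkσ
  obtain ⟨x, hx, hx0⟩ := hkB.exists_hasEigenvector
  have hAx : A x = k • (x : H) := congrArg Subtype.val (mem_eigenspace_iff.mp hx)
  have hkA : HasEigenvalue (A : Module.End ℂ H) k :=
    hasEigenvalue_of_hasEigenvector ⟨mem_eigenspace_iff.mpr hAx, by simpa using hx0⟩
  have hk_eq : k = ‖A‖ := by rw [← hk_norm]; exact hA.toLinearMap.eq_norm_of_hasEigenvalue hkA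
  have hxE : (x : H) ∈ E := mem_eigenspace_iff.mpr (hk_eq ▸ hAx)
  exact hx0 (Subtype.ext (Submodule.disjoint_def.mp (Submodule.orthogonal_disjoint E) _ hxE x.2))

end ContinuousLinearMap

open ContinuousLinearMap in
/-- Distributionally normalized power iteration: for a compact, self-adjoint,
positive-semidefinite operator `A ≠ 0` on a complex Hilbert space with `μ = ‖A‖`,
if `V = P U` is the orthogonal projection of `U` onto the eigenspace
`E = ker(A − μ·I)` (i.e. `V ∈ E` and `U − V ⟂ E`) and `⟨P U, Ψ⟩ ≠ 0`, then
`⟨AⁿU, Ψ⟩ ≠ 0` for all sufficiently large `n`, and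
`AⁿU / ⟨AⁿU, Ψ⟩ → P U / ⟨P U, Ψ⟩` in norm. -/
theorem stmt10 {H : Type*} [NormedAddCommGroup H] [InnerProductSpace ℂ H] [CompleteSpace H]
    (A : H →L[ℂ] H) (hsa : IsSelfAdjoint A) (hcp : IsCompactOperator A)
    (hpos : ∀ x : H, 0 ≤ (inner ℂ (A x) x : ℂ).re) (hA : 0 < ‖A‖)
    (U Ψ V : H)
    (hV : V ∈ Module.End.eigenspace (A : H →ₗ[ℂ] H) ((‖A‖ : ℂ)))
    (hUV : U - V ∈ (Module.End.eigenspace (A : H →ₗ[ℂ] H) ((‖A‖ : ℂ)))ᗮ)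
    (hne : (inner ℂ V Ψ : ℂ) ≠ 0) :
    (∀ᶠ n : ℕ in atTop, (inner ℂ ((A ^ n) U) Ψ : ℂ) ≠ 0) ∧
    Tendsto (fun n : ℕ => ((inner ℂ ((A ^ n) U) Ψ : ℂ))⁻¹ • (A ^ n) U) atTop
      (𝓝 (((inner ℂ V Ψ : ℂ))⁻¹ • V)) := by
  have hApos : A.IsPositive := ⟨hsa.isSymmetric, hpos⟩
  have hgap := hApos.norm_restrict_orthogonal_eigenspace_lt hcp (norm_pos_iff.mp hA)
  have hconv :=
    tendsto_inv_pow_smul_pow_apply (μ := (‖A‖ : ℂ)) _ (hgap.trans_eq (by simp)) hV hUV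
  refine tendsto_inv_inner_smul_of_eq_ofReal_smul (c := fun n => ‖A‖ ^ n)
    (fun n => (pow_pos hA n).ne') (fun n => ?_) hconv hne
  rw [RCLike.ofReal_pow]
  exact (smul_inv_smul₀ (pow_ne_zero n (Complex.ofReal_ne_zero.mpr hA.ne')) ((A ^ n) U)).symm
end

section
/- Let a > 0. For ξ ∈ ℝ² define γ(ξ) = √(|ξ|² − 1) if |ξ| > 1 and γ(ξ) = 0 if |ξ| ≤ 1. Then the double integral ∫_{ℝ²} ∫_{ℝ²} e^{−a(γ(η′) + γ(η̃′))} · √(|1 − |η̃′|²|) / √(|1 − |η′|²|) d²η̃′ d²η′ is finite. -/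
/-! The integrand is `f(η′) · g(η̃′)` for the radial functions
`f = e^{-aγ} / √|1 - r²|` and `g = e^{-aγ} · √|1 - r²|`, so it suffices that both are integrable
on the plane, i.e. that `r f(r)` and `r g(r)` are integrable on `(0, ∞)`. Since `γ(r) ≥ r - 1`,
both are dominated by `e^{-ar}` times a polynomial at infinity. The only singularity,
`r / √|1 - r²|` at `r = 1`, is integrable since it is the derivative of `-√(1 - r²)` on `(0, 1)`
and of `√(r² - 1)` on `(1, ∞)`. -/

open MeasureTheory

/-- The evanescent decay rate `γ(ξ) = √(|ξ|² − 1)` for `|ξ| > 1`, and `0` otherwise. -/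
noncomputable def gammaEv (ξ : EuclideanSpace ℝ (Fin 2)) : ℝ :=
  if 1 < ‖ξ‖ then Real.sqrt (‖ξ‖ ^ 2 - 1) else 0

open Set Real

noncomputable def radialGamma (r : ℝ) : ℝ := if 1 < r then √(r ^ 2 - 1) else 0

lemma gammaEv_eq_radialGamma (ξ : EuclideanSpace ℝ (Fin 2)) :
    gammaEv ξ = radialGamma ‖ξ‖ := rfl

@[fun_prop]
lemma measurable_radialGamma : Measurable radialGamma :=
  Measurable.ite measurableSet_Ioi (by fun_prop) measurable_const

lemma radialGamma_nonneg (r : ℝ) : 0 ≤ radialGamma r := by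
  unfold radialGamma; split_ifs <;> positivity

lemma sub_one_le_radialGamma (r : ℝ) : r - 1 ≤ radialGamma r := by
  unfold radialGamma
  split_ifs with h
  · exact le_sqrt_of_sq_le (by nlinarith)
  · linarith

lemma exp_neg_mul_radialGamma_le_one {a : ℝ} (ha : 0 ≤ a) (r : ℝ) :
    exp (-a * radialGamma r) ≤ 1 :=
  exp_le_one_iff.2 (by nlinarith [radialGamma_nonneg r])

lemma exp_neg_mul_radialGamma_le {a : ℝ} (ha : 0 ≤ a) (r : ℝ) :
    exp (-a * radialGamma r) ≤ exp a * exp (-a * r) := by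
  rw [← exp_add, exp_le_exp]
  nlinarith [sub_one_le_radialGamma r]

lemma integrableOn_pow_mul_exp_neg_mul (n : ℕ) {b : ℝ} (hb : 0 < b) :
    IntegrableOn (fun x : ℝ => x ^ n * exp (-b * x)) (Ioi 0) := by
  simpa [rpow_natCast, rpow_one] using
    integrableOn_rpow_mul_exp_neg_mul_rpow (s := n) (by linarith [n.cast_nonneg (α := ℝ)])
      one_pos hb

lemma integrableOn_div_sqrt_abs_one_sub_sq {b : ℝ} (hb : 1 ≤ b) :
    IntegrableOn (fun r : ℝ => r / √|1 - r ^ 2|) (Ioc 0 b) := by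
  rw [← Ioc_union_Ioc_eq_Ioc zero_le_one hb]
  refine IntegrableOn.union ?_ ?_
  · refine intervalIntegral.integrableOn_deriv_of_nonneg (g := fun r => -√(1 - r ^ 2))
      (by fun_prop) (fun r hr => ?_) (fun r hr => by have := hr.1; positivity)
    have hpos : 0 < 1 - r ^ 2 := by nlinarith [hr.1, hr.2]
    refine (((hasDerivAt_pow 2 r).const_sub 1).sqrt hpos.ne').neg.congr_deriv ?_
    rw [abs_of_pos hpos]
    field_simp
    ring
  · refine intervalIntegral.integrableOn_deriv_of_nonneg (g := fun r => √(r ^ 2 - 1))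
      (by fun_prop) (fun r hr => ?_) (fun r hr => by have := hr.1; positivity)
    have hpos : 0 < r ^ 2 - 1 := by nlinarith [hr.1, hr.2]
    refine (((hasDerivAt_pow 2 r).sub_const 1).sqrt hpos.ne').congr_deriv ?_
    rw [abs_sub_comm, abs_of_pos hpos]
    field_simp
    ring

lemma integrable_fun_norm_euclideanSpace_fin_two {f : ℝ → ℝ}
    (hf : IntegrableOn (fun r => r * f r) (Ioi 0)) :
    Integrable (fun x : EuclideanSpace ℝ (Fin 2) => f ‖x‖) :=
  (integrable_fun_norm_addHaar volume).2 (by simpa [finrank_euclideanSpace_fin] using hf)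

lemma sqrt_abs_one_sub_sq_le {r : ℝ} (hr : 0 ≤ r) : √|1 - r ^ 2| ≤ 1 + r :=
  (sqrt_le_left (by linarith)).2 (abs_le.2 ⟨by nlinarith, by nlinarith⟩)

lemma one_le_sqrt_abs_one_sub_sq {r : ℝ} (hr : 2 ≤ r) : 1 ≤ √|1 - r ^ 2| :=
  one_le_sqrt.2 (le_abs.2 (Or.inr (by nlinarith)))

lemma integrableOn_mul_exp_neg_mul_radialGamma_mul_sqrt {a : ℝ} (ha : 0 < a) :
    IntegrableOn (fun r => r * (exp (-a * radialGamma r) * √|1 - r ^ 2|)) (Ioi 0) := by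
  have hdom := ((integrableOn_pow_mul_exp_neg_mul 1 ha).add
    (integrableOn_pow_mul_exp_neg_mul 2 ha)).const_mul (exp a)
  refine hdom.mono' (by fun_prop) ?_
  filter_upwards [ae_restrict_mem measurableSet_Ioi] with r (hr : 0 < r)
  rw [norm_of_nonneg (by positivity)]
  calc r * (exp (-a * radialGamma r) * √|1 - r ^ 2|)
      ≤ r * (exp a * exp (-a * r) * (1 + r)) := by
        gcongr
        exacts [exp_neg_mul_radialGamma_le ha.le r, sqrt_abs_one_sub_sq_le hr.le]
    _ = exp a * (r ^ 1 * exp (-a * r) + r ^ 2 * exp (-a * r)) := by ring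

lemma integrableOn_mul_exp_neg_mul_radialGamma_div_sqrt {a : ℝ} (ha : 0 < a) :
    IntegrableOn (fun r => r * (exp (-a * radialGamma r) / √|1 - r ^ 2|)) (Ioi 0) := by
  have hmeas : AEStronglyMeasurable
      (fun r => r * (exp (-a * radialGamma r) / √|1 - r ^ 2|)) := by fun_prop
  rw [← Ioc_union_Ioi_eq_Ioi zero_le_two]
  refine IntegrableOn.union ?_ ?_
  · refine (integrableOn_div_sqrt_abs_one_sub_sq one_le_two).mono' hmeas.restrict ?_
    filter_upwards [ae_restrict_mem measurableSet_Ioc] with r hr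
    rw [norm_of_nonneg (by have := hr.1; positivity), mul_div_left_comm]
    exact mul_le_of_le_one_left (by have := hr.1; positivity)
      (exp_neg_mul_radialGamma_le_one ha.le r)
  · have hdom : IntegrableOn (fun r => exp a * (r ^ 1 * exp (-a * r))) (Ioi 2) :=
      IntegrableOn.mono_set ((integrableOn_pow_mul_exp_neg_mul 1 ha).const_mul (exp a))
        (Ioi_subset_Ioi zero_le_two)
    refine hdom.mono' hmeas.restrict ?_
    filter_upwards [ae_restrict_mem measurableSet_Ioi] with r (hr : 2 < r)
    rw [norm_of_nonneg (by positivity)]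
    calc r * (exp (-a * radialGamma r) / √|1 - r ^ 2|)
        ≤ r * (exp a * exp (-a * r)) := by
          gcongr
          exact (div_le_self (exp_pos _).le (one_le_sqrt_abs_one_sub_sq hr.le)).trans
            (exp_neg_mul_radialGamma_le ha.le r)
      _ = exp a * (r ^ 1 * exp (-a * r)) := by ring

/-- For every `a > 0`, the double integral
`∫∫ e^(−a(γ(η′)+γ(η̃′))) · √(|1 − |η̃′|²|)/√(|1 − |η′|²|) d²η̃′ d²η′` is finite. -/
theorem stmt13 (a : ℝ) (ha : 0 < a) :
    (∫⁻ η' : EuclideanSpace ℝ (Fin 2), ∫⁻ ηt' : EuclideanSpace ℝ (Fin 2),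
        ENNReal.ofReal (Real.exp (-a * (gammaEv η' + gammaEv ηt')) *
          Real.sqrt |1 - ‖ηt'‖ ^ 2| / Real.sqrt |1 - ‖η'‖ ^ 2|)) < ⊤ := by
  have hF := integrable_fun_norm_euclideanSpace_fin_two
    (integrableOn_mul_exp_neg_mul_radialGamma_div_sqrt ha)
  have hG := integrable_fun_norm_euclideanSpace_fin_two
    (integrableOn_mul_exp_neg_mul_radialGamma_mul_sqrt ha)
  have hsplit : ∀ η' ηt' : EuclideanSpace ℝ (Fin 2),
      ENNReal.ofReal (exp (-a * (gammaEv η' + gammaEv ηt')) *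
          √|1 - ‖ηt'‖ ^ 2| / √|1 - ‖η'‖ ^ 2|) =
        ENNReal.ofReal (exp (-a * radialGamma ‖η'‖) / √|1 - ‖η'‖ ^ 2|) *
          ENNReal.ofReal (exp (-a * radialGamma ‖ηt'‖) * √|1 - ‖ηt'‖ ^ 2|) := by
    intro η' ηt'
    rw [← ENNReal.ofReal_mul (by positivity), gammaEv_eq_radialGamma, gammaEv_eq_radialGamma,
      mul_add, exp_add]
    ring_nf
  simp_rw [hsplit]
  rw [lintegral_lintegral_mul hF.1.aemeasurable.ennreal_ofReal hG.1.aemeasurable.ennreal_ofReal]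
  exact ENNReal.mul_lt_top hF.lintegral_lt_top hG.lintegral_lt_top
end
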